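/- In the bipartiteness reduction setting, if L ≠ I(u), then G'₃ contains a triangle (and hence an odd cycle), so G'₃ is not bipartite. -/

import Mathlib

/-!
The edges of `G'₂` at `u` go to `S₂`, and so do those of `L`; as `L ≠ I(u)`, some edge `u v`
with `v ∈ S₂` lies in exactly one of them and therefore survives in `G'₃`. The edge `v v*` of
`G'₂` is untouched, and `u v*` is added, so `u, v, v*` is a triangle. A triangle is a 3-clique,
which no 2-colourable graph contains.
-/

namespace SimpleGraph

variable {V : Type*}

theorem fromEdgeSet_symmDiff_adj (G : SimpleGraph V) (F : Set (Sym2 V)) {x y : V} :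
    (fromEdgeSet (symmDiff G.edgeSet F)).Adj x y ↔ Xor (G.Adj x y) (s(x, y) ∈ F) ∧ x ≠ y :=
  fromEdgeSet_adj _

theorem exists_xor_adj_mem_of_ne_incidenceSet {G : SimpleGraph V} {u : V}
    {L : Set (Sym2 V)} (hL : ∀ e ∈ L, u ∈ e) (hne : L ≠ G.incidenceSet u) :
    ∃ v, Xor (G.Adj u v) (s(u, v) ∈ L) := by
  obtain ⟨e, he⟩ : (symmDiff L (G.incidenceSet u)).Nonempty :=
    Set.nonempty_iff_ne_empty.2 (symmDiff_eq_bot.not.2 hne)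
  have hue : u ∈ e := he.elim (fun h => hL e h.1) (fun h => h.1.2)
  refine ⟨Sym2.Mem.other hue, ?_⟩
  rw [← mem_edgeSet, Sym2.other_spec hue]
  rcases he with ⟨heL, heI⟩ | ⟨heI, heL⟩
  · exact Or.inr ⟨heL, fun heG => heI ⟨heG, hue⟩⟩
  · exact Or.inl ⟨heI.1, heL⟩

theorem not_colorable_two_of_adj {G : SimpleGraph V} {x y z : V}
    (hxy : G.Adj x y) (hyz : G.Adj y z) (hzx : G.Adj z x) : ¬ G.Colorable 2 := by
  classical
  exact fun hc => hc.cliqueFree (by norm_num) {x, y, z}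
    (is3Clique_triple_iff.2 ⟨hxy, hzx.symm, hyz⟩)

end SimpleGraph

open SimpleGraph

-- `v* = none`, `S₁ = some ∘ Sum.inl`, `S₂ = some ∘ Sum.inr`.
theorem xor_not_bipartite_of_ne_general (k : ℕ)
    (G₂ : SimpleGraph (Option (Fin k ⊕ Fin k)))
    (hstar₂ : ∀ b : Fin k, G₂.Adj none (some (Sum.inr b)))
    (hstar₁ : ∀ a : Fin k, ¬ G₂.Adj none (some (Sum.inl a)))
    (h₁₁ : ∀ a a' : Fin k, ¬ G₂.Adj (some (Sum.inl a)) (some (Sum.inl a')))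
    (u : Fin k)
    (L : Set (Sym2 (Option (Fin k ⊕ Fin k))))
    (hL : ∀ e ∈ L, ∃ b : Fin k, e = s(some (Sum.inl u), some (Sum.inr b)))
    (hne : L ≠ {e ∈ G₂.edgeSet | (some (Sum.inl u) : Option (Fin k ⊕ Fin k)) ∈ e}) :
    letI G₃ := SimpleGraph.fromEdgeSet
      (symmDiff G₂.edgeSet (L ∪ {s(some (Sum.inl u), none)}))
    (∃ x y z : Option (Fin k ⊕ Fin k),
        G₃.Adj x y ∧ G₃.Adj y z ∧ G₃.Adj z x) ∧ ¬ G₃.Colorable 2 := by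
  set G₃ := fromEdgeSet (symmDiff G₂.edgeSet (L ∪ {s(some (Sum.inl u), none)}))
  set U : Option (Fin k ⊕ Fin k) := some (Sum.inl u)
  have hLU : ∀ e ∈ L, U ∈ e := fun e he => by
    obtain ⟨b, rfl⟩ := hL e he
    exact Sym2.mem_mk_left _ _
  obtain ⟨v, hv⟩ := exists_xor_adj_mem_of_ne_incidenceSet hLU hne
  obtain ⟨b, rfl⟩ : ∃ b, v = some (Sum.inr b) := by
    rcases hv with ⟨hG, -⟩ | ⟨hLv, -⟩
    · rcases v with _ | a | b
      · exact absurd hG.symm (hstar₁ u)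
      · exact absurd hG (h₁₁ u a)
      · exact ⟨b, rfl⟩
    · obtain ⟨b, hb⟩ := hL _ hLv
      exact ⟨b, Sym2.congr_right.1 hb⟩
  have hxy : G₃.Adj U (some (Sum.inr b)) := by
    refine (fromEdgeSet_symmDiff_adj _ _).2 ⟨?_, by simp [U]⟩
    simpa [U] using hv
  have hyz : G₃.Adj (some (Sum.inr b)) none := by
    refine (fromEdgeSet_symmDiff_adj _ _).2 ⟨Or.inl ⟨(hstar₂ b).symm, ?_⟩, by simp⟩
    rintro (h | h)
    · simpa [U] using hLU _ h
    · simp at h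
  have hzx : G₃.Adj none U :=
    (fromEdgeSet_symmDiff_adj _ _).2 ⟨Or.inr ⟨Or.inr Sym2.eq_swap, hstar₁ u⟩, by simp [U]⟩
  exact ⟨⟨_, _, _, hxy, hyz, hzx⟩, not_colorable_two_of_adj hxy hyz hzx⟩

/-- In the bipartiteness reduction setting, if `L ≠ I(u)` then the
graph `G₃` obtained by XOR-ing the edges of `G₂` with `L ∪ {(u, v*)}` contains a
triangle, and hence is not bipartite. (Vertices are encoded as
`Option (Fin k ⊕ Fin k)` with `v* = none`, `S₁` the left summand and `S₂` the
right summand.) -/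
theorem xor_not_bipartite_of_ne (k : ℕ)
    (G₂ : SimpleGraph (Option (Fin k ⊕ Fin k)))
    (hstar₂ : ∀ b : Fin k, G₂.Adj none (some (Sum.inr b)))
    (hstar₁ : ∀ a : Fin k, ¬ G₂.Adj none (some (Sum.inl a)))
    (h₁₁ : ∀ a a' : Fin k, ¬ G₂.Adj (some (Sum.inl a)) (some (Sum.inl a')))
    (h₂₂ : ∀ b b' : Fin k, ¬ G₂.Adj (some (Sum.inr b)) (some (Sum.inr b')))
    (u : Fin k)
    (L : Set (Sym2 (Option (Fin k ⊕ Fin k))))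
    (hL : ∀ e ∈ L, ∃ b : Fin k, e = s(some (Sum.inl u), some (Sum.inr b)))
    (hne : L ≠ {e ∈ G₂.edgeSet | (some (Sum.inl u) : Option (Fin k ⊕ Fin k)) ∈ e}) :
    letI G₃ := SimpleGraph.fromEdgeSet
      (symmDiff G₂.edgeSet (L ∪ {s(some (Sum.inl u), none)}))
    (∃ x y z : Option (Fin k ⊕ Fin k),
        G₃.Adj x y ∧ G₃.Adj y z ∧ G₃.Adj z x) ∧ ¬ G₃.Colorable 2 :=
  xor_not_bipartite_of_ne_general k G₂ hstar₂ hstar₁ h₁₁ u L hL hne
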